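/- arXiv:1212.2154 — 9 statements merged into one kernel-verified Lean document; each statement's English description precedes it below -/
import Mathlib

section
/- Let l be a complete lattice satisfying the distributive law x ⊓ (y ⊔ z) = (x ⊓ y) ⊔ (x ⊓ z) for all x, y, z ∈ l. Let P₁ and P₂ be mv-linear-time properties over AP whose images Im(P₁) and Im(P₂) are finite subsets of l. Then Closure(P₁ ⊔ P₂) = Closure(P₁) ⊔ Closure(P₂), where ⊔ denotes the pointwise join of mv-linear-time properties. -/
/-- The infinite word obtained by prepending the finite word `θ` to the
infinite word `τ`. -/
def prependWord {AP : Type*} (θ : List (Set AP)) (τ : ℕ → Set AP) : ℕ → Set AP :=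
  fun n => if h : n < θ.length then θ.get ⟨n, h⟩ else τ (n - θ.length)

/-- The finite prefix `σ|n = (σ 0, …, σ (n-1))` of an infinite word `σ`. -/
def prefixWord {AP : Type*} (σ : ℕ → Set AP) (n : ℕ) : List (Set AP) :=
  List.ofFn (fun i : Fin n => σ i)

/-- The closure of an mv-linear-time property:
`Closure(P)(σ) = ⨅ n, ⨆ τ, P((σ|n)·τ)`. -/
def mvClosure {AP l : Type*} [CompleteLattice l] (P : (ℕ → Set AP) → l) :
    (ℕ → Set AP) → l :=
  fun σ => ⨅ n : ℕ, ⨆ τ : ℕ → Set AP, P (prependWord (prefixWord σ n) τ)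

lemma prepend_succ_aux {AP : Type*} (σ : ℕ → Set AP) (n : ℕ) (τ : ℕ → Set AP) :
    prependWord (prefixWord σ (n+1)) τ
      = prependWord (prefixWord σ n) (prependWord [σ n] τ) := by
  funext k
  simp only [prependWord, prefixWord, List.length_ofFn, List.get_ofFn, List.length_cons,
    List.length_nil]
  rcases lt_trichotomy k n with h | h | h
  · rw [dif_pos (by omega), dif_pos h]
    rfl
  · subst h
    rw [dif_pos (by omega), dif_neg (by omega), dif_pos (by omega)]
    simp
  · rw [dif_neg (by omega), dif_neg (by omega), dif_neg (by omega)]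
    congr 1

lemma antitone_aux {AP l : Type*} [CompleteLattice l] (P : (ℕ → Set AP) → l)
    (σ : ℕ → Set AP) :
    Antitone (fun n => ⨆ τ : ℕ → Set AP, P (prependWord (prefixWord σ n) τ)) := by
  apply antitone_nat_of_succ_le
  intro n
  apply iSup_le
  intro τ
  rw [prepend_succ_aux]
  exact le_iSup_of_le (prependWord [σ n] τ) le_rfl

lemma finrange_aux {AP l : Type*} [CompleteLattice l] (P : (ℕ → Set AP) → l)
    (h : (Set.range P).Finite) (σ : ℕ → Set AP) :
    (Set.range (fun n => ⨆ τ : ℕ → Set AP, P (prependWord (prefixWord σ n) τ))).Finite := by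
  apply Set.Finite.subset (h.finite_subsets.image sSup)
  rintro x ⟨n, rfl⟩
  refine ⟨Set.range (fun τ => P (prependWord (prefixWord σ n) τ)), ?_, sSup_range⟩
  rintro y ⟨τ, rfl⟩
  exact ⟨_, rfl⟩

lemma eventually_const_aux {l : Type*} [CompleteLattice l] (f : ℕ → l)
    (hf : Antitone f) (h : (Set.range f).Finite) :
    ∃ N, ∀ n, N ≤ n → f n = f N := by
  have : Finite (Set.range f) := h
  obtain ⟨y, hy⟩ := Finite.exists_infinite_fiber (Set.rangeFactorization f)
  rw [Set.infinite_coe_iff] at hy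
  obtain ⟨N, hN⟩ := hy.nonempty
  refine ⟨N, fun n hn => ?_⟩
  obtain ⟨m, hm, hnm⟩ := hy.exists_gt n
  have hfm : f m = f N := by
    have h1 : Set.rangeFactorization f m = y := hm
    have h2 : Set.rangeFactorization f N = y := hN
    have := congrArg Subtype.val (h1.trans h2.symm)
    simpa [Set.rangeFactorization] using this
  have hle1 : f m ≤ f n := hf (le_of_lt hnm)
  have hle2 : f n ≤ f N := hf hn
  exact le_antisymm hle2 (hfm ▸ hle1)

/-- If `l` is a complete lattice satisfying the distributive law and
`P₁, P₂` have finite images, then `Closure(P₁ ⊔ P₂) = Closure(P₁) ⊔ Closure(P₂)`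
(pointwise join). -/
theorem stmt2 {AP l : Type*} [CompleteLattice l]
    (hd : ∀ x y z : l, x ⊓ (y ⊔ z) = (x ⊓ y) ⊔ (x ⊓ z))
    (P₁ P₂ : (ℕ → Set AP) → l)
    (h₁ : (Set.range P₁).Finite) (h₂ : (Set.range P₂).Finite) :
    mvClosure (P₁ ⊔ P₂) = mvClosure P₁ ⊔ mvClosure P₂ := by
  funext σ
  simp only [mvClosure, Pi.sup_apply]
  set f := fun n => ⨆ τ : ℕ → Set AP, P₁ (prependWord (prefixWord σ n) τ) with hfdef
  set g := fun n => ⨆ τ : ℕ → Set AP, P₂ (prependWord (prefixWord σ n) τ) with hgdef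
  have hsup : ∀ n, (⨆ τ : ℕ → Set AP,
      (P₁ (prependWord (prefixWord σ n) τ) ⊔ P₂ (prependWord (prefixWord σ n) τ)))
      = f n ⊔ g n := fun n => iSup_sup_eq
  simp only [hsup]
  obtain ⟨N₁, hN₁⟩ := eventually_const_aux f (antitone_aux P₁ σ) (finrange_aux P₁ h₁ σ)
  obtain ⟨N₂, hN₂⟩ := eventually_const_aux g (antitone_aux P₂ σ) (finrange_aux P₂ h₂ σ)
  set N := max N₁ N₂ with hNdef
  have hfN : ∀ n, N ≤ n → f n = f N := fun n hn =>
    (hN₁ n (le_trans (le_max_left _ _) hn)).trans (hN₁ N (le_max_left _ _)).symm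
  have hgN : ∀ n, N ≤ n → g n = g N := fun n hn =>
    (hN₂ n (le_trans (le_max_right _ _) hn)).trans (hN₂ N (le_max_right _ _)).symm
  have haf : Antitone f := antitone_aux P₁ σ
  have hag : Antitone g := antitone_aux P₂ σ
  have h1 : ⨅ n, (f n ⊔ g n) = f N ⊔ g N := by
    refine le_antisymm (iInf_le _ N) (le_iInf fun n => ?_)
    calc f N ⊔ g N = f (max n N) ⊔ g (max n N) := by
          rw [hfN _ (le_max_right _ _), hgN _ (le_max_right _ _)]
      _ ≤ f n ⊔ g n := sup_le_sup (haf (le_max_left _ _)) (hag (le_max_left _ _))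
  have h2 : ⨅ n, f n = f N := by
    refine le_antisymm (iInf_le _ N) (le_iInf fun n => ?_)
    calc f N = f (max n N) := (hfN _ (le_max_right _ _)).symm
      _ ≤ f n := haf (le_max_left _ _)
  have h3 : ⨅ n, g n = g N := by
    refine le_antisymm (iInf_le _ N) (le_iInf fun n => ?_)
    calc g N = g (max n N) := (hgN _ (le_max_right _ _)).symm
      _ ≤ g n := hag (le_max_left _ _)
  rw [h1, h2, h3]
end

section
/- Let l be a complete lattice, TS an mv-TS over AP, and P a safety property over AP. Then TS ⊨ P if and only if Traces_fin(TS)(θ) ≤ GPref(P)(θ) for every finite word θ, where Traces_fin(TS)(θ) = ⨆_{τ : ℕ → Set AP} Traces(TS)(θ·τ). -/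
/-- The good-prefix function of `P`: `GPref(P)(θ) = ⨆ τ, P(θ·τ)`. -/
def mvGPref {AP l : Type*} [CompleteLattice l] (P : (ℕ → Set AP) → l)
    (θ : List (Set AP)) : l :=
  ⨆ τ : ℕ → Set AP, P (prependWord θ τ)

/-- `P` is a safety property if `⨅ n, GPref(P)(σ|n) ≤ P(σ)` for every `σ`. -/
def mvIsSafety {AP l : Type*} [CompleteLattice l] (P : (ℕ → Set AP) → l) : Prop :=
  ∀ σ : ℕ → Set AP, (⨅ n : ℕ, mvGPref P (prefixWord σ n)) ≤ P σ

/-- The trace function of the mv-transition system with transition valuation `η`,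
initial valuation `I` and labeling `L`:
`Traces(TS)(σ) = ⨆_{π, α with L (π i) = σ i} I (π 0) ⊓ ⨅ i, η (π i) (α i) (π (i+1))`. -/
def mvTraces {AP l S Act : Type*} [CompleteLattice l]
    (η : S → Act → S → l) (I : S → l) (L : S → Set AP) (σ : ℕ → Set AP) : l :=
  ⨆ π : {p : ℕ → S // ∀ i : ℕ, L (p i) = σ i}, ⨆ α : ℕ → Act,
    I (π.1 0) ⊓ ⨅ i : ℕ, η (π.1 i) (α i) (π.1 (i + 1))

theorem prepend_prefix {AP : Type*} (σ : ℕ → Set AP) (n : ℕ) :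
    prependWord (prefixWord σ n) (fun k => σ (k + n)) = σ := by
  funext m
  simp only [prependWord, prefixWord, List.length_ofFn]
  split
  · next h => simp [List.get_ofFn]
  · next h => simp [Nat.sub_add_cancel (le_of_not_gt h)]

/-- For a safety property `P`, `TS ⊨ P` iff
`Traces_fin(TS)(θ) ≤ GPref(P)(θ)` for every finite word `θ`, where
`Traces_fin(TS)(θ) = ⨆ τ, Traces(TS)(θ·τ)`. -/
theorem stmt4 {AP l S Act : Type*} [CompleteLattice l]
    (η : S → Act → S → l) (I : S → l) (L : S → Set AP)
    (P : (ℕ → Set AP) → l) (hP : mvIsSafety P) :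
    (∀ σ : ℕ → Set AP, mvTraces η I L σ ≤ P σ) ↔
      (∀ θ : List (Set AP),
        (⨆ τ : ℕ → Set AP, mvTraces η I L (prependWord θ τ)) ≤ mvGPref P θ) := by
  constructor
  · intro h θ
    exact iSup_mono fun τ => h _
  · intro h σ
    refine le_trans ?_ (hP σ)
    refine le_iInf fun n => ?_
    refine le_trans ?_ (h (prefixWord σ n))
    refine le_trans (le_of_eq ?_) (le_iSup _ (fun k => σ (k + n)))
    rw [prepend_prefix]
end

section
/- Let l be a complete lattice and φ : Set AP → l. Then the invariant property inv(φ), defined by inv(φ)(σ) = ⨅_{i : ℕ} φ(σ i), is a safety property over AP. -/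
/-- The invariant property `inv(φ)(σ) = ⨅ i, φ(σ i)` is a safety property. -/
theorem stmt5 {AP l : Type*} [CompleteLattice l] (φ : Set AP → l) :
    mvIsSafety (fun σ : ℕ → Set AP => ⨅ i : ℕ, φ (σ i)) := by
  intro σ
  refine le_iInf fun i => ?_
  refine (iInf_le _ (i + 1)).trans ?_
  refine iSup_le fun τ => ?_
  refine (iInf_le _ i).trans ?_
  have h : i < (prefixWord σ (i + 1)).length := by
    simp [prefixWord, Nat.lt_succ_self]
  simp only [prependWord, h, dif_pos, prefixWord, List.get_eq_getElem, List.getElem_ofFn]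
  simp
end

section
/- Let l be a finite distributive lattice (with its induced complete-lattice structure), m ∈ l a sup-irreducible element, and φ : Set AP → l. Then the m-cut of the dual-persistence property dpers(φ) equals the classical dual-persistence property of the m-cut of φ: {σ : ℕ → Set AP | m ≤ dpers(φ)(σ)} = {σ | ∀ i : ℕ, ∃ j ≥ i, m ≤ φ(σ j)}. -/
/-- The dual-persistence property `dpers(φ)(σ) = ⨅ i, ⨆ j ≥ i, φ(σ j)`. -/
def mvDpers {AP l : Type*} [CompleteLattice l] (φ : Set AP → l) (σ : ℕ → Set AP) : l :=
  ⨅ i : ℕ, ⨆ j ≥ i, φ (σ j)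

/-! Since `l` is finite, each tail supremum `⨆ j ≥ i, φ (σ j)` is the supremum of a finite set.
In a distributive lattice a sup-irreducible element is sup-prime, so it lies below a finite
supremum exactly when it lies below one of its terms. -/

theorem SupIrred.supPrime_of_inf_sup_le {α : Type*} [Lattice α]
    (hd : ∀ x y z : α, x ⊓ (y ⊔ z) ≤ x ⊓ y ⊔ x ⊓ z) {m : α} (hm : SupIrred m) : SupPrime m := by
  let := DistribLattice.ofInfSupLe hd
  exact hm.supPrime

theorem SupPrime.le_sSup_iff_of_finite {α : Type*} [CompleteLattice α] {m : α} (hm : SupPrime m)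
    {s : Set α} (hs : s.Finite) : m ≤ sSup s ↔ ∃ a ∈ s, m ≤ a := by
  rw [← hs.coe_toFinset, ← Finset.sup_id_eq_sSup, hm.le_finset_sup]
  simp

/-- In a finite distributive (complete) lattice, for sup-irreducible `m`,
the `m`-cut of `dpers(φ)` is the classical dual-persistence property of the
`m`-cut of `φ`. -/
theorem stmt9 {AP l : Type*} [CompleteLattice l] [Fintype l]
    (hd : ∀ x y z : l, x ⊓ (y ⊔ z) = (x ⊓ y) ⊔ (x ⊓ z))
    {m : l} (hm : SupIrred m) (φ : Set AP → l) :
    {σ : ℕ → Set AP | m ≤ mvDpers φ σ} =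
      {σ : ℕ → Set AP | ∀ i : ℕ, ∃ j ≥ i, m ≤ φ (σ j)} := by
  have hprime : SupPrime m := hm.supPrime_of_inf_sup_le fun x y z => (hd x y z).le
  ext σ
  simp only [Set.mem_ofPred_eq, mvDpers, le_iInf_iff]
  refine forall_congr' fun i => ?_
  have htail : ⨆ j ≥ i, φ (σ j) = sSup ((fun j => φ (σ j)) '' Set.Ici i) := sSup_image.symm
  rw [htail, hprime.le_sSup_iff_of_finite (Set.toFinite _), Set.exists_mem_image]
  simp only [Set.mem_Ici, ge_iff_le]
end

section
/- Let l be a complete lattice equipped with an antitone involutive function ¬ : l → l, TS an mv-TS over AP without terminal states, and P an mv-linear-time property over AP. Let A be a deterministic l-VBA over the alphabet Set AP such that L_ω(A)(w) = ¬(P(w)) for every infinite word w. Then TS ⊨ P if and only if TS ⊗ A ⊨ pers(ψ), where ψ : Set Q → l is given by ψ(B) = ⨆_{q ∈ B} ¬F(q) and pers(ψ)(σ') = ⨆_{i : ℕ} ⨅_{j ≥ i} ψ(σ' j) for infinite words σ' : ℕ → Set Q. -/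
open Classical in
/-- Transition valuation of the product `TS ⊗ A` of an mv-TS with a
deterministic automaton. -/
noncomputable def prodEta {AP l S Act Q : Type*} [CompleteLattice l]
    (η : S → Act → S → l) (L : S → Set AP) (δ : Q → Set AP → Q) :
    S × Q → Act → S × Q → l :=
  fun sq a tp => if tp.2 = δ sq.2 (L tp.1) then η sq.1 a tp.1 else ⊥

open Classical in
/-- Initial valuation of the product `TS ⊗ A`. -/
noncomputable def prodInit {AP l S Q : Type*} [CompleteLattice l]
    (I : S → l) (L : S → Set AP) (δ : Q → Set AP → Q) (q0 : Q) : S × Q → l :=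
  fun sq => if sq.2 = δ q0 (L sq.1) then I sq.1 else ⊥

/-- The unique run of a deterministic automaton `(δ, q0)` on the infinite
word `w`. -/
def detRun {Q A : Type*} (δ : Q → A → Q) (q0 : Q) (w : ℕ → A) : ℕ → Q
  | 0 => q0
  | i + 1 => δ (detRun δ q0 w i) (w i)

lemma my_negle {l : Type*} [CompleteLattice l] (neg : l → l)
    (hanti : Antitone neg) (hinv : ∀ x : l, neg (neg x) = x)
    {a b : l} (h : neg b ≤ neg a) : a ≤ b := by
  have := hanti h; rwa [hinv, hinv] at this

lemma my_neg_iInf {l : Type*} [CompleteLattice l] (neg : l → l)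
    (hanti : Antitone neg) (hinv : ∀ x : l, neg (neg x) = x)
    {ι : Sort*} (f : ι → l) : neg (⨅ i, f i) = ⨆ i, neg (f i) := by
  apply le_antisymm
  · apply my_negle neg hanti hinv
    rw [hinv]
    refine le_iInf fun i => ?_
    apply my_negle neg hanti hinv
    rw [hinv]
    exact le_iSup (fun i => neg (f i)) i
  · exact iSup_le fun i => hanti (iInf_le f i)

lemma my_neg_iSup {l : Type*} [CompleteLattice l] (neg : l → l)
    (hanti : Antitone neg) (hinv : ∀ x : l, neg (neg x) = x)
    {ι : Sort*} (f : ι → l) : neg (⨆ i, f i) = ⨅ i, neg (f i) := by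
  have := my_neg_iInf neg hanti hinv (fun i => neg (f i))
  simp only [hinv] at this
  rw [← this, hinv]

lemma my_pers_eq {l : Type*} [CompleteLattice l] (neg : l → l)
    (hanti : Antitone neg) (hinv : ∀ x : l, neg (neg x) = x)
    {Q : Type*} (F : Q → l) (ρ : ℕ → Q) (p : l)
    (hA : (⨅ i : ℕ, ⨆ j ≥ i, F (ρ j)) = neg p) :
    (⨆ i : ℕ, ⨅ j ≥ i, neg (F (ρ (j + 1)))) = p := by
  have h1 : p = ⨆ i : ℕ, ⨅ j ≥ i, neg (F (ρ j)) := by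
    have h := congrArg neg hA
    rw [hinv] at h
    rw [← h, my_neg_iInf neg hanti hinv]
    refine iSup_congr fun i => ?_
    rw [my_neg_iSup neg hanti hinv]
    exact iInf_congr fun j => my_neg_iSup neg hanti hinv _
  set g : ℕ → l := fun i => ⨅ j ≥ i, neg (F (ρ j)) with hg
  have h2 : ∀ i, (⨅ j ≥ i, neg (F (ρ (j + 1)))) = g (i + 1) := by
    intro i
    apply le_antisymm
    · refine le_iInf₂ fun j hj => ?_
      obtain ⟨k, rfl⟩ : ∃ k, j = k + 1 := ⟨j - 1, by omega⟩
      exact iInf₂_le k (by omega)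
    · exact le_iInf₂ fun j hj => iInf₂_le (j + 1) (by omega)
  have gmono : ∀ i, g i ≤ g (i + 1) :=
    fun i => le_iInf₂ fun j hj => iInf₂_le j (by omega)
  rw [h1]
  apply le_antisymm
  · exact iSup_le fun i => (h2 i).le.trans (le_iSup g (i + 1))
  · exact iSup_le fun i => ((gmono i).trans (h2 i).ge).trans
      (le_iSup (fun i => ⨅ j ≥ i, neg (F (ρ (j + 1)))) i)

/-- Verification of mv-ω-regular properties via persistence: if the
deterministic `l`-VBA `A = (Q, δ, q0, F)` satisfies `L_ω(A) = ¬ P`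
(with `¬` an antitone involution on `l`), and `TS = (S, Act, η, I, L)` is an
mv-TS without terminal states, then `TS ⊨ P` iff `TS ⊗ A ⊨ pers(ψ)` where
`ψ(B) = ⨆ q ∈ B, ¬ F q`. -/
theorem stmt13 {AP l S Act Q : Type*} [CompleteLattice l]
    (neg : l → l) (hanti : Antitone neg) (hinv : ∀ x : l, neg (neg x) = x)
    (η : S → Act → S → l) (I : S → l) (L : S → Set AP)
    (hter : ∀ s : S, ∃ (a : Act) (t : S), η s a t ≠ ⊥)
    (P : (ℕ → Set AP) → l)
    (δ : Q → Set AP → Q) (q0 : Q) (F : Q → l)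
    (hA : ∀ w : ℕ → Set AP, (⨅ i : ℕ, ⨆ j ≥ i, F (detRun δ q0 w j)) = neg (P w)) :
    (∀ σ : ℕ → Set AP, mvTraces η I L σ ≤ P σ) ↔
      (∀ σ' : ℕ → Set Q,
        mvTraces (prodEta η L δ) (prodInit I L δ q0)
            (fun sq : S × Q => ({sq.2} : Set Q)) σ' ≤
          ⨆ i : ℕ, ⨅ j ≥ i, ⨆ q ∈ σ' j, neg (F q)) := by
  constructor
  · intro h σ'
    rw [mvTraces]
    refine iSup_le fun ⟨π', hπ'⟩ => iSup_le fun α => ?_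
    simp only
    by_cases h0 : (π' 0).2 = δ q0 (L (π' 0).1)
    · by_cases hstep : ∀ i, (π' (i + 1)).2 = δ (π' i).2 (L (π' (i + 1)).1)
      · set σ : ℕ → Set AP := fun i => L (π' i).1 with hσ
        have hrun : ∀ i, (π' i).2 = detRun δ q0 σ (i + 1) := by
          intro i; induction i with
          | zero => simpa [detRun] using h0
          | succ n ih => rw [hstep n, ih]; rfl
        have hval : prodInit I L δ q0 (π' 0) = I (π' 0).1 := by
          rw [prodInit, if_pos h0]
        have hval2 : ∀ i, prodEta η L δ (π' i) (α i) (π' (i + 1)) =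
            η (π' i).1 (α i) (π' (i + 1)).1 := fun i => by
          rw [prodEta, if_pos (hstep i)]
        calc prodInit I L δ q0 (π' 0) ⊓ ⨅ i, prodEta η L δ (π' i) (α i) (π' (i + 1))
            = I (π' 0).1 ⊓ ⨅ i, η (π' i).1 (α i) (π' (i + 1)).1 := by
              rw [hval]; exact congrArg _ (iInf_congr hval2)
          _ ≤ mvTraces η I L σ := by
              rw [mvTraces]
              exact le_iSup_of_le ⟨fun i => (π' i).1, fun i => rfl⟩
                (le_iSup_of_le α le_rfl)
          _ ≤ P σ := h σ
          _ = ⨆ i : ℕ, ⨅ j ≥ i, ⨆ q ∈ σ' j, neg (F q) := by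
              rw [← my_pers_eq neg hanti hinv F (detRun δ q0 σ) (P σ) (hA σ)]
              refine iSup_congr fun i => iInf_congr fun j => iInf_congr fun hj => ?_
              rw [← hπ' j, ← hrun j]
              simp
      · push_neg at hstep
        obtain ⟨i, hi⟩ := hstep
        refine le_trans (inf_le_right.trans (iInf_le _ i)) ?_
        rw [prodEta, if_neg hi]
        exact bot_le
    · have hb : prodInit I L δ q0 (π' 0) = ⊥ := by rw [prodInit, if_neg h0]
      exact le_trans (inf_le_left.trans hb.le) bot_le
  · intro h σ
    rw [mvTraces]
    refine iSup_le fun ⟨π, hπ⟩ => iSup_le fun α => ?_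
    simp only
    set ρ : ℕ → Q := detRun δ q0 σ with hρ
    set σ' : ℕ → Set Q := fun i => ({ρ (i + 1)} : Set Q) with hσ'
    have key : I (π 0) ⊓ ⨅ i, η (π i) (α i) (π (i + 1)) ≤
        mvTraces (prodEta η L δ) (prodInit I L δ q0)
          (fun sq : S × Q => ({sq.2} : Set Q)) σ' := by
      rw [mvTraces]
      refine le_iSup_of_le ⟨fun i => (π i, ρ (i + 1)), fun i => rfl⟩
        (le_iSup_of_le α (le_of_eq ?_))
      have e0 : prodInit I L δ q0 (π 0, ρ 1) = I (π 0) := by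
        rw [prodInit, if_pos]
        show ρ 1 = δ q0 (L (π 0))
        rw [hπ 0]; rfl
      have e1 : ∀ i, prodEta η L δ (π i, ρ (i + 1)) (α i) (π (i + 1), ρ (i + 2)) =
          η (π i) (α i) (π (i + 1)) := fun i => by
        rw [prodEta, if_pos]
        show ρ (i + 2) = δ (ρ (i + 1)) (L (π (i + 1)))
        rw [hπ (i + 1)]; rfl
      rw [e0]
      exact congrArg _ (iInf_congr fun i => (e1 i).symm)
    refine key.trans ((h σ').trans (le_of_eq ?_))
    rw [← my_pers_eq neg hanti hinv F ρ (P σ) (hA σ)]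
    exact iSup_congr fun i => iInf_congr fun j => iInf_congr fun hj => by simp [hσ']
end

section
/- Let l be a complete lattice, TS an mv-TS over AP without terminal states, and P an mv-linear-time property over AP. Let A be a deterministic l-VBA over the alphabet Set AP such that L_ω(A)(w) = P(w) for every infinite word w. Then TS ⊨ P if and only if TS ⊗ A ⊨ dpers(ψ), where ψ : Set Q → l is given by ψ(B) = ⨆_{q ∈ B} F(q) and dpers(ψ)(σ') = ⨅_{i : ℕ} ⨆_{j ≥ i} ψ(σ' j) for infinite words σ' : ℕ → Set Q. -/
private lemma shiftLem {l : Type*} [CompleteLattice l] (f : ℕ → l) :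
    (⨅ i : ℕ, ⨆ j ≥ i, f (j + 1)) = ⨅ i : ℕ, ⨆ j ≥ i, f j := by
  have h1 : ∀ i : ℕ, (⨆ j ≥ i, f (j + 1)) = ⨆ k ≥ i + 1, f k := by
    intro i
    apply le_antisymm
    · exact iSup₂_le fun j hj => le_iSup₂_of_le (j + 1) (by omega) le_rfl
    · refine iSup₂_le fun k hk => ?_
      obtain ⟨j, rfl⟩ : ∃ j, k = j + 1 := ⟨k - 1, by omega⟩
      exact le_iSup₂_of_le j (by omega) le_rfl
  simp_rw [h1]
  apply le_antisymm
  · exact le_iInf fun i => (iInf_le _ i).trans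
      (iSup₂_le fun j hj => le_iSup₂_of_le j (by omega) le_rfl)
  · exact le_iInf fun i => iInf_le _ (i + 1)

/-- Verification of mv-ω-regular properties via dual-persistence: if the
deterministic `l`-VBA `A = (Q, δ, q0, F)` satisfies `L_ω(A) = P`, and
`TS = (S, Act, η, I, L)` is an mv-TS without terminal states, then `TS ⊨ P`
iff `TS ⊗ A ⊨ dpers(ψ)` where `ψ(B) = ⨆ q ∈ B, F q`. -/
theorem stmt14 {AP l S Act Q : Type*} [CompleteLattice l]
    (η : S → Act → S → l) (I : S → l) (L : S → Set AP)
    (hter : ∀ s : S, ∃ (a : Act) (t : S), η s a t ≠ ⊥)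
    (P : (ℕ → Set AP) → l)
    (δ : Q → Set AP → Q) (q0 : Q) (F : Q → l)
    (hA : ∀ w : ℕ → Set AP, (⨅ i : ℕ, ⨆ j ≥ i, F (detRun δ q0 w j)) = P w) :
    (∀ σ : ℕ → Set AP, mvTraces η I L σ ≤ P σ) ↔
      (∀ σ' : ℕ → Set Q,
        mvTraces (prodEta η L δ) (prodInit I L δ q0)
            (fun sq : S × Q => ({sq.2} : Set Q)) σ' ≤
          ⨅ i : ℕ, ⨆ j ≥ i, ⨆ q ∈ σ' j, F q) := by
  constructor
  · intro h σ'
    rw [mvTraces]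
    refine iSup_le fun π' => iSup_le fun α => ?_
    by_cases hc : ((π'.1 0).2 = δ q0 (L (π'.1 0).1)) ∧
        ∀ i, (π'.1 (i + 1)).2 = δ (π'.1 i).2 (L (π'.1 (i + 1)).1)
    · set w : ℕ → Set AP := fun i => L (π'.1 i).1 with hw
      have hq : ∀ i, (π'.1 i).2 = detRun δ q0 w (i + 1) := by
        intro i; induction i with
        | zero => simpa [detRun] using hc.1
        | succ n ih =>
            show _ = δ (detRun δ q0 w (n + 1)) (w (n + 1))
            rw [← ih]; exact hc.2 n
      have hσ' : ∀ j, σ' j = {(π'.1 j).2} := fun j => (π'.2 j).symm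
      have hR : (⨅ i : ℕ, ⨆ j ≥ i, ⨆ q ∈ σ' j, F q) = P w := by
        have hj : ∀ j, (⨆ q ∈ σ' j, F q) = F (detRun δ q0 w (j + 1)) := by
          intro j; rw [hσ' j, ← hq j]; simp
        simp_rw [hj]
        exact (shiftLem fun j => F (detRun δ q0 w j)).trans (hA w)
      rw [hR]
      refine le_trans ?_ (h w)
      have h1 : prodInit I L δ q0 (π'.1 0) = I (π'.1 0).1 := by
        simp [prodInit, hc.1]
      have h2 : ∀ i, prodEta η L δ (π'.1 i) (α i) (π'.1 (i + 1)) =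
          η (π'.1 i).1 (α i) (π'.1 (i + 1)).1 := by
        intro i; simp [prodEta, hc.2 i]
      rw [mvTraces]
      refine le_iSup_of_le ⟨fun i => (π'.1 i).1, fun _ => rfl⟩ ?_
      refine le_iSup_of_le α ?_
      rw [h1]
      exact inf_le_inf le_rfl (le_iInf fun i => (iInf_le _ i).trans (h2 i).le)
    · rw [not_and_or] at hc
      rcases hc with hc | hc
      · refine le_trans inf_le_left ?_
        simp [prodInit, hc]
      · push_neg at hc
        obtain ⟨i, hi⟩ := hc
        refine le_trans inf_le_right ?_
        refine le_trans (iInf_le _ i) ?_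
        simp [prodEta, hi]
  · intro h σ
    rw [mvTraces]
    refine iSup_le fun π => iSup_le fun α => ?_
    set q : ℕ → Q := fun i => detRun δ q0 σ (i + 1) with hqdef
    refine le_trans ?_ (le_trans (h fun i => {q i}) ?_)
    · rw [mvTraces]
      refine le_iSup_of_le ⟨fun i => (π.1 i, q i), fun _ => rfl⟩ ?_
      refine le_iSup_of_le α ?_
      have h1 : prodInit I L δ q0 (π.1 0, q 0) = I (π.1 0) := by
        simp [prodInit, hqdef, detRun, π.2 0]
      have h2 : ∀ i, prodEta η L δ (π.1 i, q i) (α i) (π.1 (i + 1), q (i + 1)) =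
          η (π.1 i) (α i) (π.1 (i + 1)) := by
        intro i
        have hqs : q (i + 1) = δ (q i) (L (π.1 (i + 1))) := by
          rw [π.2 (i + 1)]; rfl
        simp [prodEta, hqs]
      rw [h1]
      exact inf_le_inf le_rfl (le_iInf fun i => (iInf_le _ i).trans (h2 i).ge)
    · have hj : ∀ j, (⨆ x ∈ ({q j} : Set Q), F x) = F (detRun δ q0 σ (j + 1)) := by
        intro j; simp [hqdef]
      simp_rw [hj]
      exact le_of_eq ((shiftLem fun j => F (detRun δ q0 σ j)).trans (hA σ))
end

section
/- Let l be a complete lattice, TS an mv-TS over AP without terminal states, and P an mv-linear-time property over AP. Let A be an l-VDRA over the alphabet Set AP with L_ω(A)(w) = P(w) for every infinite word w. Then TS ⊨ P if and only if TS ⊗_R A ⊨ d(A), where d(A) : (ℕ → Set (Set Q)) → l is defined by d(A)(σ') = ⨆ { F H K : H, K ⊆ Q, (∃ n, ∀ m ≥ n, H ∉ σ' m) and (∀ n, ∃ m ≥ n, K ∈ σ' m) }. -/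
/-- The ω-language of an `l`-valued deterministic Rabin automaton
`(Q, δ, q0, F)`. -/
def vdraLang {l Q A : Type*} [CompleteLattice l]
    (δ : Q → A → Q) (q0 : Q) (F : Set Q → Set Q → l) (w : ℕ → A) : l :=
  ⨆ H : Set Q, ⨆ K : Set Q,
    ⨆ _ : (∃ n : ℕ, ∀ m ≥ n, detRun δ q0 w m ∉ H) ∧
            (∀ n : ℕ, ∃ m ≥ n, detRun δ q0 w m ∈ K),
      F H K

/-- The mv-linear-time property `d(A)` over `Set Q` associated with an
`l`-VDRA with acceptance valuation `F`. -/
def dA {l Q : Type*} [CompleteLattice l] (F : Set Q → Set Q → l)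
    (σ' : ℕ → Set (Set Q)) : l :=
  ⨆ H : Set Q, ⨆ K : Set Q,
    ⨆ _ : (∃ n : ℕ, ∀ m ≥ n, H ∉ σ' m) ∧ (∀ n : ℕ, ∃ m ≥ n, K ∈ σ' m),
      F H K

lemma shift_and {p q : ℕ → Prop} :
    ((∃ n, ∀ m ≥ n, p (m + 1)) ∧ (∀ n, ∃ m ≥ n, q (m + 1))) ↔
    ((∃ n, ∀ m ≥ n, p m) ∧ (∀ n, ∃ m ≥ n, q m)) := by
  constructor
  · rintro ⟨⟨n, hn⟩, hq⟩
    refine ⟨⟨n + 1, fun m hm => ?_⟩, fun n => ?_⟩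
    · simpa [Nat.sub_add_cancel (by omega : 1 ≤ m)] using hn (m - 1) (by omega)
    · obtain ⟨m, hm, hqm⟩ := hq n
      exact ⟨m + 1, by omega, hqm⟩
  · rintro ⟨⟨n, hn⟩, hq⟩
    refine ⟨⟨n, fun m hm => hn (m + 1) (by omega)⟩, fun n => ?_⟩
    obtain ⟨m, hm, hqm⟩ := hq (n + 1)
    exact ⟨m - 1, by omega, by simpa [Nat.sub_add_cancel (by omega : 1 ≤ m)] using hqm⟩

lemma dA_detRun {l Q A : Type*} [CompleteLattice l] (δ : Q → A → Q) (q0 : Q)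
    (F : Set Q → Set Q → l) (w : ℕ → A) :
    dA F (fun i => {H : Set Q | detRun δ q0 w (i + 1) ∈ H}) = vdraLang δ q0 F w := by
  unfold dA vdraLang
  refine iSup_congr fun H => iSup_congr fun K => ?_
  refine iSup_congr_Prop ?_ fun _ => rfl
  simpa [Set.mem_setOf_eq] using
    (shift_and (p := fun m => detRun δ q0 w m ∉ H) (q := fun m => detRun δ q0 w m ∈ K))

/-- Verification of mv-ω-regular properties via Rabin automata: if the
`l`-VDRA `A = (Q, δ, q0, F)` satisfies `L_ω(A) = P`, and `TS = (S, Act, η, I, L)`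
is an mv-TS without terminal states, then `TS ⊨ P` iff `TS ⊗_R A ⊨ d(A)`,
where the Rabin product is labeled by `L'(s,q) = {H | q ∈ H}`. -/
theorem stmt15 {AP l S Act Q : Type*} [CompleteLattice l]
    (η : S → Act → S → l) (I : S → l) (L : S → Set AP)
    (hter : ∀ s : S, ∃ (a : Act) (t : S), η s a t ≠ ⊥)
    (P : (ℕ → Set AP) → l)
    (δ : Q → Set AP → Q) (q0 : Q) (F : Set Q → Set Q → l)
    (hA : ∀ w : ℕ → Set AP, vdraLang δ q0 F w = P w) :
    (∀ σ : ℕ → Set AP, mvTraces η I L σ ≤ P σ) ↔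
      (∀ σ' : ℕ → Set (Set Q),
        mvTraces (prodEta η L δ) (prodInit I L δ q0)
            (fun sq : S × Q => {H : Set Q | sq.2 ∈ H}) σ' ≤ dA F σ') := by
  constructor
  · intro h σ'
    refine iSup_le fun π' => iSup_le fun α => ?_
    by_cases h0 : (π'.1 0).2 = δ q0 (L (π'.1 0).1)
    · by_cases hstep : ∀ i, (π'.1 (i + 1)).2 = δ (π'.1 i).2 (L (π'.1 (i + 1)).1)
      · -- all transition conditions hold
        set w : ℕ → Set AP := fun i => L (π'.1 i).1 with hw
        have hrun : ∀ i, (π'.1 i).2 = detRun δ q0 w (i + 1) := by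
          intro i
          induction i with
          | zero => simpa [detRun] using h0
          | succ n ih => rw [hstep n, ih]; rfl
        have hσ' : σ' = fun i => {H : Set Q | detRun δ q0 w (i + 1) ∈ H} := by
          funext i
          rw [← π'.2 i]
          show {H : Set Q | (π'.1 i).2 ∈ H} = _
          rw [hrun i]
        have hI : prodInit I L δ q0 (π'.1 0) = I (π'.1 0).1 := by
          simp [prodInit, h0]
        have hη : ∀ i, prodEta η L δ (π'.1 i) (α i) (π'.1 (i + 1)) =
            η (π'.1 i).1 (α i) (π'.1 (i + 1)).1 := by
          intro i; simp [prodEta, hstep i]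
        calc prodInit I L δ q0 (π'.1 0) ⊓
              ⨅ i, prodEta η L δ (π'.1 i) (α i) (π'.1 (i + 1))
            = I (π'.1 0).1 ⊓ ⨅ i, η (π'.1 i).1 (α i) (π'.1 (i + 1)).1 := by
              rw [hI]; exact congrArg _ (iInf_congr hη)
          _ ≤ mvTraces η I L w := by
              refine le_trans ?_ (le_iSup _ (⟨fun i => (π'.1 i).1, fun i => rfl⟩ :
                {p : ℕ → S // ∀ i, L (p i) = w i}))
              exact le_iSup (fun α => I (π'.1 0).1 ⊓
                ⨅ i, η (π'.1 i).1 (α i) (π'.1 (i + 1)).1) α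
          _ ≤ P w := h w
          _ = vdraLang δ q0 F w := (hA w).symm
          _ = dA F σ' := by rw [hσ', dA_detRun]
      · push_neg at hstep
        obtain ⟨i, hi⟩ := hstep
        refine le_trans inf_le_right (le_trans (iInf_le _ i) ?_)
        simp [prodEta, hi]
    · refine le_trans inf_le_left ?_
      simp [prodInit, h0]
  · intro h σ
    refine iSup_le fun π => iSup_le fun α => ?_
    set q : ℕ → Q := fun i => detRun δ q0 σ (i + 1) with hq
    set σ' : ℕ → Set (Set Q) := fun i => {H : Set Q | q i ∈ H} with hσ'
    have hI : I (π.1 0) = prodInit I L δ q0 (π.1 0, q 0) := by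
      simp [prodInit, hq, detRun, π.2 0]
    have hη : ∀ i, η (π.1 i) (α i) (π.1 (i + 1)) =
        prodEta η L δ (π.1 i, q i) (α i) (π.1 (i + 1), q (i + 1)) := by
      intro i
      have : q (i + 1) = δ (q i) (L (π.1 (i + 1))) := by
        simp [hq, detRun, π.2 (i + 1)]
      simp [prodEta, this]
    calc I (π.1 0) ⊓ ⨅ i, η (π.1 i) (α i) (π.1 (i + 1))
        = prodInit I L δ q0 (π.1 0, q 0) ⊓
            ⨅ i, prodEta η L δ (π.1 i, q i) (α i) (π.1 (i + 1), q (i + 1)) := by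
          rw [hI]; exact congrArg _ (iInf_congr hη)
      _ ≤ mvTraces (prodEta η L δ) (prodInit I L δ q0)
            (fun sq : S × Q => {H : Set Q | sq.2 ∈ H}) σ' := by
          refine le_trans ?_ (le_iSup _ (⟨fun i => (π.1 i, q i), fun i => rfl⟩ :
            {p : ℕ → S × Q // ∀ i, {H : Set Q | (p i).2 ∈ H} = σ' i}))
          exact le_iSup (fun α => prodInit I L δ q0 (π.1 0, q 0) ⊓
            ⨅ i, prodEta η L δ (π.1 i, q i) (α i) (π.1 (i + 1), q (i + 1))) α
      _ ≤ dA F σ' := h σ'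
      _ = vdraLang δ q0 F σ := dA_detRun δ q0 F σ
      _ = P σ := hA σ
end

section
/- Let l be a finite distributive lattice (with its induced complete-lattice structure) and Σ a finite alphabet (a finite type). If f₁, f₂ : (ℕ → Σ) → l are each the ω-language of some l-VDRA over Σ, then the pointwise join f₁ ⊔ f₂ is also the ω-language of some l-VDRA over Σ. -/
section RabinValue

variable {l Q P A : Type*} [CompleteLattice l]

def rabinValue (F : Set Q → Set Q → l) (ρ : ℕ → Q) : l :=
  ⨆ H : Set Q, ⨆ K : Set Q,
    ⨆ _ : (∃ n : ℕ, ∀ m ≥ n, ρ m ∉ H) ∧ (∀ n : ℕ, ∃ m ≥ n, ρ m ∈ K), F H K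

theorem vdraLang_eq_rabinValue (δ : Q → A → Q) (q0 : Q) (F : Set Q → Set Q → l) (w : ℕ → A) :
    vdraLang δ q0 F w = rabinValue F (detRun δ q0 w) :=
  rfl

theorem rabinValue_sup (F G : Set Q → Set Q → l) (ρ : ℕ → Q) :
    rabinValue (F ⊔ G) ρ = rabinValue F ρ ⊔ rabinValue G ρ := by
  simp only [rabinValue, Pi.sup_apply, iSup_sup_eq]

def comapValuation (π : Q → P) (F : Set P → Set P → l) : Set Q → Set Q → l :=
  fun H K => ⨆ H' : Set P, ⨆ K' : Set P, ⨆ _ : H = π ⁻¹' H' ∧ K = π ⁻¹' K', F H' K'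

theorem rabinValue_comapValuation (π : Q → P) (F : Set P → Set P → l) (ρ : ℕ → Q) :
    rabinValue (comapValuation π F) ρ = rabinValue F (π ∘ ρ) := by
  apply le_antisymm
  · refine iSup_le fun H => iSup_le fun K => iSup_le fun hρ =>
      iSup_le fun H' => iSup_le fun K' => iSup_le fun ⟨hH, hK⟩ => ?_
    subst hH hK
    exact le_iSup_of_le H' <| le_iSup_of_le K' <| le_iSup_of_le hρ le_rfl
  · refine iSup_le fun H' => iSup_le fun K' => iSup_le fun hρ => ?_
    refine le_iSup_of_le (π ⁻¹' H') <| le_iSup_of_le (π ⁻¹' K') <| le_iSup_of_le hρ ?_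
    exact le_iSup_of_le H' <| le_iSup_of_le K' <| le_iSup_of_le ⟨rfl, rfl⟩ le_rfl

end RabinValue

theorem detRun_prod {Q₁ Q₂ A : Type*} (δ₁ : Q₁ → A → Q₁) (δ₂ : Q₂ → A → Q₂)
    (q₁ : Q₁) (q₂ : Q₂) (w : ℕ → A) (n : ℕ) :
    detRun (fun p a => (δ₁ p.1 a, δ₂ p.2 a)) (q₁, q₂) w n
      = (detRun δ₁ q₁ w n, detRun δ₂ q₂ w n) := by
  induction n with
  | zero => rfl
  | succ n ih => simp only [detRun, ih]

theorem vdraLang_prod_sup {l Q₁ Q₂ A : Type*} [CompleteLattice l]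
    (δ₁ : Q₁ → A → Q₁) (δ₂ : Q₂ → A → Q₂) (q₁ : Q₁) (q₂ : Q₂)
    (F₁ : Set Q₁ → Set Q₁ → l) (F₂ : Set Q₂ → Set Q₂ → l) (w : ℕ → A) :
    vdraLang (fun p a => (δ₁ p.1 a, δ₂ p.2 a)) (q₁, q₂)
        (comapValuation Prod.fst F₁ ⊔ comapValuation Prod.snd F₂) w
      = vdraLang δ₁ q₁ F₁ w ⊔ vdraLang δ₂ q₂ F₂ w := by
  have hrun : detRun (fun p a => (δ₁ p.1 a, δ₂ p.2 a)) (q₁, q₂) w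
      = fun n => (detRun δ₁ q₁ w n, detRun δ₂ q₂ w n) :=
    funext (detRun_prod δ₁ δ₂ q₁ q₂ w)
  simp only [vdraLang_eq_rabinValue, rabinValue_sup, rabinValue_comapValuation, hrun]
  rfl

theorem stmt17_general {l : Type} [CompleteLattice l]
    {A : Type} (f₁ f₂ : (ℕ → A) → l)
    (h₁ : ∃ (Q : Type) (_ : Fintype Q) (δ : Q → A → Q) (q0 : Q)
        (F : Set Q → Set Q → l), ∀ w : ℕ → A, f₁ w = vdraLang δ q0 F w)
    (h₂ : ∃ (Q : Type) (_ : Fintype Q) (δ : Q → A → Q) (q0 : Q)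
        (F : Set Q → Set Q → l), ∀ w : ℕ → A, f₂ w = vdraLang δ q0 F w) :
    ∃ (Q : Type) (_ : Fintype Q) (δ : Q → A → Q) (q0 : Q)
        (F : Set Q → Set Q → l), ∀ w : ℕ → A, f₁ w ⊔ f₂ w = vdraLang δ q0 F w := by
  obtain ⟨Q₁, _, δ₁, q₁, F₁, hF₁⟩ := h₁
  obtain ⟨Q₂, _, δ₂, q₂, F₂, hF₂⟩ := h₂
  refine ⟨Q₁ × Q₂, inferInstance, fun p a => (δ₁ p.1 a, δ₂ p.2 a), (q₁, q₂),
    comapValuation Prod.fst F₁ ⊔ comapValuation Prod.snd F₂, fun w => ?_⟩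
  rw [vdraLang_prod_sup, hF₁, hF₂]

/-- Over a finite distributive (complete) lattice and a finite alphabet,
the class of ω-languages of `l`-VDRAs is closed under pointwise join. -/
theorem stmt17 {l : Type} [CompleteLattice l] [Fintype l]
    (hd : ∀ x y z : l, x ⊓ (y ⊔ z) = (x ⊓ y) ⊔ (x ⊓ z))
    {A : Type} [Fintype A] (f₁ f₂ : (ℕ → A) → l)
    (h₁ : ∃ (Q : Type) (_ : Fintype Q) (δ : Q → A → Q) (q0 : Q)
        (F : Set Q → Set Q → l), ∀ w : ℕ → A, f₁ w = vdraLang δ q0 F w)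
    (h₂ : ∃ (Q : Type) (_ : Fintype Q) (δ : Q → A → Q) (q0 : Q)
        (F : Set Q → Set Q → l), ∀ w : ℕ → A, f₂ w = vdraLang δ q0 F w) :
    ∃ (Q : Type) (_ : Fintype Q) (δ : Q → A → Q) (q0 : Q)
        (F : Set Q → Set Q → l), ∀ w : ℕ → A, f₁ w ⊔ f₂ w = vdraLang δ q0 F w :=
  stmt17_general f₁ f₂ h₁ h₂
end

section
/- Let l be a finite distributive lattice (with its induced complete-lattice structure) and Σ a finite alphabet (a finite type). For a function f : (ℕ → Σ) → l the following are equivalent: (1) f is the ω-language of some l-VBA over Σ; (2) for every a ∈ l, the a-cut {w : ℕ → Σ | a ≤ f(w)} is an ω-regular language over Σ; (3) there exist k ∈ ℕ, elements m : Fin k → l and ω-regular languages 𝓛 : Fin k → Set (ℕ → Σ) such that f(w) = ⨆_{i : Fin k, w ∈ 𝓛 i} m i for every w. -/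
/-!
For a sup-prime `p` of a finite lattice, `p ≤ ⨆ i, g i` is witnessed by a single `i`, so the
`p`-cut of an `l`-VBA is accepted by the Büchi automaton that keeps the transitions, initial
and final states of value `≥ p`. In a finite distributive lattice every `a` is the join of the
sup-primes below it, so the `a`-cut is a finite intersection of such languages, and ω-regular
languages are closed under intersection. Conversely `f w = ⨆ a ≤ f w, a` exhibits `f` as a
weighted join of its cuts, and a weighted join of ω-regular languages is the ω-language of the
disjoint union of their Büchi automata, each component valued in `{⊥, mᵢ}`.
-/

/-- The ω-language of an `l`-valued Büchi automaton `(Q, δ, I, F)`. -/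
def vbaLang {l Q A : Type*} [CompleteLattice l]
    (δ : Q → A → Q → l) (I : Q → l) (F : Q → l) (w : ℕ → A) : l :=
  ⨆ q : ℕ → Q, ⨆ J : {J : Set ℕ // J.Infinite},
    I (q 0) ⊓ (⨅ i : ℕ, δ (q i) (w i) (q (i + 1))) ⊓ ⨅ j ∈ J.1, F (q j)

/-- A classical nondeterministic Büchi automaton `(Δ, Q0, Acc)` accepts the
infinite word `w`. -/
def buchiAccepts {Q A : Type*} (Δ : Set (Q × A × Q)) (Q0 Acc : Set Q)
    (w : ℕ → A) : Prop :=
  ∃ q : ℕ → Q, q 0 ∈ Q0 ∧ (∀ i : ℕ, (q i, w i, q (i + 1)) ∈ Δ) ∧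
    {j : ℕ | q j ∈ Acc}.Infinite

/-- A set of infinite words over `A` is ω-regular if it is the language of
some classical Büchi automaton with a finite state type. -/
def OmegaRegular {A : Type} (Lang : Set (ℕ → A)) : Prop :=
  ∃ (Q : Type) (_ : Fintype Q) (Δ : Set (Q × A × Q)) (Q0 Acc : Set Q),
    Lang = {w : ℕ → A | buchiAccepts Δ Q0 Acc w}

open Filter Set

theorem SupPrime.le_iSup_iff {α : Type*} [CompleteLattice α] [Finite α] {ι : Sort*} {p : α}
    (hp : SupPrime p) {g : ι → α} : p ≤ iSup g ↔ ∃ i, p ≤ g i := by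
  refine ⟨fun h => ?_, fun ⟨i, hi⟩ => hi.trans (le_iSup g i)⟩
  have hfin := toFinite (range g)
  rw [← sSup_range, ← hfin.coe_toFinset, ← Finset.sup_id_eq_sSup] at h
  obtain ⟨_, hx, hpx⟩ := hp.le_finset_sup.1 h
  obtain ⟨i, rfl⟩ := hfin.mem_toFinset.1 hx
  exact ⟨i, hpx⟩

theorem le_iff_forall_supPrime_le {α : Type*} [DistribLattice α] [OrderBot α] [WellFoundedLT α]
    {a b : α} : a ≤ b ↔ ∀ p, SupPrime p → p ≤ a → p ≤ b := by
  refine ⟨fun h p _ hp => hp.trans h, fun h => ?_⟩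
  obtain ⟨s, rfl, hs⟩ := exists_supIrred_decomposition a
  exact Finset.sup_le fun p hp =>
    h p (supPrime_iff_supIrred.2 (hs hp)) (Finset.le_sup (f := id) hp)

namespace Nat

theorem persists_until {p r : ℕ → Prop} (h : ∀ k, p k → ¬r k → p (k + 1)) {n m : ℕ}
    (hn : p n) (hnm : n ≤ m) (hr : ∀ k, n ≤ k → k < m → ¬r k) : p m := by
  induction m, hnm using Nat.le_induction with
  | base => exact hn
  | succ m hnm ih =>
    exact h m (ih fun k hk hkm => hr k hk (by omega)) (hr m hnm (by omega))

theorem exists_ge_and_of_persists {p r : ℕ → Prop} (h : ∀ k, p k → ¬r k → p (k + 1))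
    {n : ℕ} (hn : p n) (hr : ∃ m ≥ n, r m) : ∃ m ≥ n, p m ∧ r m := by
  classical
  let m := Nat.find hr
  obtain ⟨hnm, hrm⟩ : m ≥ n ∧ r m := Nat.find_spec hr
  refine ⟨m, hnm, persists_until h hn hnm fun k hk hkm hrk => ?_, hrm⟩
  exact Nat.find_min hr hkm ⟨hk, hrk⟩

end Nat

/-- The flag `b` waits for `p` while `false` and for `r` while `true`, switching when it sees
what it waits for; so `b ∧ r` recurs iff both `p` and `r` recur. -/
theorem frequently_flag_and_iff {p r : ℕ → Prop} [DecidablePred p] [DecidablePred r]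
    {b : ℕ → Bool} (hb : ∀ n, b (n + 1) = if b n then !decide (r n) else decide (p n)) :
    (∃ᶠ n in atTop, b n ∧ r n) ↔ (∃ᶠ n in atTop, p n) ∧ ∃ᶠ n in atTop, r n := by
  have hfalse : ∀ k, b k = false → ¬p k → b (k + 1) = false := fun k hk hp => by
    simp [hb, hk, hp]
  have htrue : ∀ k, b k = true → ¬r k → b (k + 1) = true := fun k hk hr => by
    simp [hb, hk, hr]
  simp only [frequently_atTop]
  constructor
  · intro h
    refine ⟨fun N => ?_, fun N => (h N).imp fun n ⟨hn, _, hr⟩ => ⟨hn, hr⟩⟩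
    by_contra! hp
    obtain ⟨n, hNn, hbn, hrn⟩ := h N
    obtain ⟨m, hnm, hbm, -⟩ := h (n + 1)
    have hbn' : b (n + 1) = false := by simp [hb, hbn, hrn]
    have := Nat.persists_until hfalse hbn' hnm fun k hk _ => hp k (by omega)
    simp [hbm] at this
  · rintro ⟨hp, hr⟩ N
    obtain ⟨n, hNn, hbn⟩ : ∃ n ≥ N, b n = true := by
      cases hbN : b N
      · obtain ⟨m, hNm, hbm, hpm⟩ := Nat.exists_ge_and_of_persists hfalse hbN (hp N)
        exact ⟨m + 1, by omega, by simp [hb, hbm, hpm]⟩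
      · exact ⟨N, le_rfl, hbN⟩
    obtain ⟨m, hnm, hm⟩ := Nat.exists_ge_and_of_persists htrue hbn (hr n)
    exact ⟨m, hNn.trans hnm, hm⟩

namespace OmegaRegular

variable {A : Type}

theorem univ : OmegaRegular (Set.univ : Set (ℕ → A)) :=
  ⟨Unit, inferInstance, Set.univ, Set.univ, Set.univ, Eq.symm <| eq_univ_of_forall fun _ =>
    ⟨fun _ => (), trivial, fun _ => trivial, by simpa using Set.infinite_univ⟩⟩

theorem inter {L₁ L₂ : Set (ℕ → A)} (h₁ : OmegaRegular L₁) (h₂ : OmegaRegular L₂) :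
    OmegaRegular (L₁ ∩ L₂) := by
  classical
  obtain ⟨Q₁, _, Δ₁, I₁, Acc₁, rfl⟩ := h₁
  obtain ⟨Q₂, _, Δ₂, I₂, Acc₂, rfl⟩ := h₂
  let flag (s : Q₁ × Q₂ × Bool) : Bool :=
    if s.2.2 then !decide (s.2.1 ∈ Acc₂) else decide (s.1 ∈ Acc₁)
  refine ⟨Q₁ × Q₂ × Bool, inferInstance,
    {x | (x.1.1, x.2.1, x.2.2.1) ∈ Δ₁ ∧ (x.1.2.1, x.2.1, x.2.2.2.1) ∈ Δ₂ ∧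
      x.2.2.2.2 = flag x.1},
    {s | s.1 ∈ I₁ ∧ s.2.1 ∈ I₂}, {s | s.2.2 = true ∧ s.2.1 ∈ Acc₂}, ?_⟩
  ext w
  simp only [mem_inter_iff, mem_ofPred_eq, buchiAccepts,
    ← Nat.frequently_atTop_iff_infinite]
  constructor
  · rintro ⟨⟨q₁, h₁0, h₁, hacc₁⟩, ⟨q₂, h₂0, h₂, hacc₂⟩⟩
    let b (n : ℕ) : Bool := Nat.rec false (fun i bi => flag (q₁ i, q₂ i, bi)) n
    exact ⟨fun n => (q₁ n, q₂ n, b n), ⟨h₁0, h₂0⟩, fun n => ⟨h₁ n, h₂ n, rfl⟩,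
      (frequently_flag_and_iff fun _ => rfl).2 ⟨hacc₁, hacc₂⟩⟩
  · rintro ⟨q, ⟨h₁0, h₂0⟩, hq, hacc⟩
    obtain ⟨hacc₁, hacc₂⟩ := (frequently_flag_and_iff fun n => (hq n).2.2).1 hacc
    exact ⟨⟨_, h₁0, fun n => (hq n).1, hacc₁⟩, ⟨_, h₂0, fun n => (hq n).2.1, hacc₂⟩⟩

theorem biInter {ι : Type*} {s : Set ι} (hs : s.Finite) {L : ι → Set (ℕ → A)}
    (h : ∀ i ∈ s, OmegaRegular (L i)) : OmegaRegular (⋂ i ∈ s, L i) := by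
  induction s, hs using Set.Finite.induction_on with
  | empty => simpa using univ
  | insert _ _ ih =>
    rw [biInter_insert]
    exact (h _ (mem_insert _ _)).inter (ih fun i hi => h i (mem_insert_of_mem _ hi))

end OmegaRegular

section VBA

variable {l A Q : Type*} [CompleteLattice l]

theorem setOf_supPrime_le_vbaLang [Finite l] {p : l} (hp : SupPrime p) (δ : Q → A → Q → l)
    (I F : Q → l) :
    {w | p ≤ vbaLang δ I F w} =
      {w | buchiAccepts {x | p ≤ δ x.1 x.2.1 x.2.2} {q | p ≤ I q} {q | p ≤ F q} w} := by
  ext w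
  simp only [mem_ofPred_eq, vbaLang, hp.le_iSup_iff, le_inf_iff, le_iInf_iff, buchiAccepts]
  constructor
  · rintro ⟨q, ⟨J, hJ⟩, ⟨hI, hδ⟩, hF⟩
    exact ⟨q, hI, hδ, hJ.mono hF⟩
  · rintro ⟨q, hI, hδ, hF⟩
    exact ⟨q, ⟨_, hF⟩, ⟨hI, hδ⟩, fun _ => id⟩

theorem vbaLang_iSup_mem_eq (Δ : Set (Q × A × Q)) (I Acc : Set Q) (m : l) (w : ℕ → A) :
    vbaLang (fun p a q => ⨆ _ : (p, a, q) ∈ Δ, m) (fun q => ⨆ _ : q ∈ I, m)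
      (fun q => ⨆ _ : q ∈ Acc, m) w = ⨆ _ : buchiAccepts Δ I Acc w, m := by
  apply le_antisymm
  · refine iSup₂_le fun q J => ?_
    by_cases hrun : q 0 ∈ I ∧ (∀ i, (q i, w i, q (i + 1)) ∈ Δ) ∧ ∀ j ∈ J.1, q j ∈ Acc
    · exact (inf_le_left.trans inf_le_left).trans <| iSup_const_le.trans <|
        le_iSup_of_le ⟨q, hrun.1, hrun.2.1, J.2.mono hrun.2.2⟩ le_rfl
    · refine le_trans ?_ bot_le
      simp only [not_and_or, not_forall] at hrun
      rcases hrun with h0 | ⟨i, hi⟩ | ⟨j, hj, hjAcc⟩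
      · exact (inf_le_left.trans inf_le_left).trans (iSup_neg h0).le
      · exact (inf_le_left.trans inf_le_right).trans ((iInf_le _ i).trans (iSup_neg hi).le)
      · exact inf_le_right.trans ((iInf₂_le j hj).trans (iSup_neg hjAcc).le)
  · refine iSup_le fun ⟨q, h0, hΔ, hAcc⟩ => le_iSup₂_of_le q ⟨_, hAcc⟩ ?_
    exact le_inf
      (le_inf (le_iSup_of_le h0 le_rfl) (le_iInf fun i => le_iSup_of_le (hΔ i) le_rfl))
      (le_iInf₂ fun j hj => le_iSup_of_le hj le_rfl)

/-- `⨆ h : s.1 = t.1` is `⊥` across components and transports `s.2` along `h` within one. -/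
def sigmaδ {ι : Type*} {Q : ι → Type*} (δ : ∀ i, Q i → A → Q i → l) :
    (Σ i, Q i) → A → (Σ i, Q i) → l :=
  fun s a t => ⨆ h : s.1 = t.1, δ t.1 (h ▸ s.2) a t.2

theorem vbaLang_sigma {ι : Type*} {Q : ι → Type*} (δ : ∀ i, Q i → A → Q i → l)
    (I F : ∀ i, Q i → l) (w : ℕ → A) :
    vbaLang (sigmaδ δ) (fun s => I s.1 s.2) (fun s => F s.1 s.2) w =
      ⨆ i, vbaLang (δ i) (I i) (F i) w := by
  apply le_antisymm
  · refine iSup₂_le fun q J => ?_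
    by_cases hcross : ∃ n, (q n).1 ≠ (q (n + 1)).1
    · obtain ⟨n, hn⟩ := hcross
      exact (inf_le_left.trans inf_le_right).trans <| (iInf_le _ n).trans <|
        (iSup_neg hn).le.trans bot_le
    · push Not at hcross
      generalize hi : (q 0).1 = i
      have hq : ∀ n, ∃ x : Q i, q n = ⟨i, x⟩ := fun n =>
        have hn : (q n).1 = i := hi ▸ Nat.rec rfl (fun n ih => (hcross n).symm.trans ih) n
        ⟨cast (congrArg Q hn) (q n).2, Sigma.ext hn (cast_heq _ _).symm⟩
      choose q' hq' using hq
      obtain rfl : q = fun n => ⟨i, q' n⟩ := funext hq'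
      simp only [sigmaδ, iSup_pos]
      exact le_iSup_of_le i (le_iSup₂_of_le q' J le_rfl)
  · refine iSup_le fun i => iSup₂_le fun q J => ?_
    refine le_iSup₂_of_le (fun n => (⟨i, q n⟩ : Σ i, Q i)) J ?_
    simp only [sigmaδ, iSup_pos]
    exact le_rfl

end VBA

theorem stmt18_general {l : Type} [CompleteLattice l] [Fintype l]
    (hd : ∀ x y z : l, x ⊓ (y ⊔ z) = (x ⊓ y) ⊔ (x ⊓ z))
    {A : Type} (f : (ℕ → A) → l) :
    List.TFAE
      [∃ (Q : Type) (_ : Fintype Q) (δ : Q → A → Q → l) (I F : Q → l),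
         ∀ w : ℕ → A, f w = vbaLang δ I F w,
       ∀ a : l, OmegaRegular {w : ℕ → A | a ≤ f w},
       ∃ (k : ℕ) (m : Fin k → l) (Ls : Fin k → Set (ℕ → A)),
         (∀ i : Fin k, OmegaRegular (Ls i)) ∧
           ∀ w : ℕ → A, f w = ⨆ i : Fin k, ⨆ _ : w ∈ Ls i, m i] := by
  tfae_have 1 → 2 := by
    rintro ⟨Q, _, δ, I, F, hf⟩ a
    let _ : DistribLattice l := .ofInfSupLe fun x y z => (hd x y z).le
    have hcut : {w | a ≤ f w} = ⋂ p ∈ {p : l | SupPrime p ∧ p ≤ a}, {w | p ≤ f w} := by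
      ext w
      simpa using le_iff_forall_supPrime_le
    rw [hcut]
    refine .biInter (toFinite _) fun p hp => ?_
    simp only [hf, setOf_supPrime_le_vbaLang hp.1]
    exact ⟨Q, inferInstance, _, _, _, rfl⟩
  tfae_have 2 → 3 := fun hcuts =>
    let e := (Fintype.equivFin l).symm
    ⟨_, e, fun i => {w | e i ≤ f w}, fun i => hcuts (e i), fun w =>
      (biSup_le_eq_of_monotone monotone_id (f w)).symm.trans
        (e.iSup_comp (g := fun a => ⨆ _ : a ≤ f w, a)).symm⟩
  tfae_have 3 → 1 := by
    rintro ⟨k, m, L, hL, hf⟩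
    choose Q _ Δ I Acc hL using hL
    refine ⟨Σ i, Q i, inferInstance, sigmaδ fun i p a q => ⨆ _ : (p, a, q) ∈ Δ i, m i,
      fun s => ⨆ _ : s.2 ∈ I s.1, m s.1, fun s => ⨆ _ : s.2 ∈ Acc s.1, m s.1, fun w => ?_⟩
    rw [vbaLang_sigma (I := fun i q => ⨆ _ : q ∈ I i, m i)
      (F := fun i q => ⨆ _ : q ∈ Acc i, m i), hf]
    simp only [vbaLang_iSup_mem_eq, hL, mem_ofPred_eq]
  tfae_finish

/-- Over a finite distributive (complete) lattice and a finite alphabet, for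
`f : (ℕ → A) → l` the following are equivalent: (1) `f` is the ω-language of
some `l`-VBA; (2) every `a`-cut of `f` is ω-regular; (3) `f` is a finite join
of ω-regular languages weighted by lattice elements. -/
theorem stmt18 {l : Type} [CompleteLattice l] [Fintype l]
    (hd : ∀ x y z : l, x ⊓ (y ⊔ z) = (x ⊓ y) ⊔ (x ⊓ z))
    {A : Type} [Fintype A] (f : (ℕ → A) → l) :
    List.TFAE
      [∃ (Q : Type) (_ : Fintype Q) (δ : Q → A → Q → l) (I F : Q → l),
         ∀ w : ℕ → A, f w = vbaLang δ I F w,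
       ∀ a : l, OmegaRegular {w : ℕ → A | a ≤ f w},
       ∃ (k : ℕ) (m : Fin k → l) (Ls : Fin k → Set (ℕ → A)),
         (∀ i : Fin k, OmegaRegular (Ls i)) ∧
           ∀ w : ℕ → A, f w = ⨆ i : Fin k, ⨆ _ : w ∈ Ls i, m i] :=
  stmt18_general hd f
end
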